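/- Let l > 0 and σ > 0, set K_σ := {k > 0 : cos(kl) = 0 or 2k·sin(kl) = σ·cos(kl)}, and suppose κ : ℕ → ℝ is a strictly increasing function whose range is exactly K_σ. Then for every m ∈ ℕ one has κ(2m+1) = (2m+1)π/(2l). In particular the odd-indexed elements of the increasing enumeration of K_σ do not depend on σ and coincide with the corresponding square roots (2m+1)π/(2l) of the Kirchhoff–Neumann eigenvalues, so the corresponding eigenvalue gaps vanish. -/

import Mathlib

/-!
Put `x = k l` and `c = σ l`. The points `(2m+1)π/2` are the zeros of `cos x`, and between two
consecutive ones, on `(jπ - π/2, jπ + π/2)`, the remaining equation `2 x sin x = c cos x` has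
exactly one positive solution: writing `x = y + jπ` it becomes `2 x sin y = c cos y` with
`|y| < π/2`, which fails for `y ≤ 0` by sign, while for `y ∈ [0, π/2]` the left side minus the
right side is strictly increasing from `-c` to `π + 2jπ`. So the increasing enumeration of the
roots alternates between these single solutions and the zeros of `cos`, which therefore occupy
the odd places.
-/

open Real Set

section Enumeration

variable {α : Type*} [LinearOrder α] {κ : ℕ → α}

theorem StrictMono.apply_zero_eq_of_forall_le (hκ : StrictMono κ) {y : α} (hy : y ∈ range κ)
    (hmin : ∀ z ∈ range κ, y ≤ z) : κ 0 = y := by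
  obtain ⟨j, rfl⟩ := hy
  exact le_antisymm (hκ.monotone j.zero_le) (hmin _ (mem_range_self 0))

theorem StrictMono.apply_succ_eq_of_forall_notMem_Ioo (hκ : StrictMono κ) {i : ℕ} {y : α}
    (hy : y ∈ range κ) (hlt : κ i < y) (hgap : ∀ z ∈ range κ, z ∉ Ioo (κ i) y) :
    κ (i + 1) = y := by
  obtain ⟨j, rfl⟩ := hy
  have hij : i + 1 ≤ j := hκ.lt_iff_lt.mp hlt
  refine (hκ.monotone hij).antisymm (not_lt.mp fun h => ?_)
  exact hgap _ (mem_range_self _) ⟨hκ i.lt_succ_self, h⟩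

theorem StrictMono.apply_two_mul_add_one_eq (hκ : StrictMono κ) {b : ℕ → α}
    (hb : ∀ m, b m ∈ range κ) (h0 : ∃ s, range κ ∩ Iio (b 0) = {s})
    (hstep : ∀ m, ∃ s, range κ ∩ Ioo (b m) (b (m + 1)) = {s}) (m : ℕ) :
    κ (2 * m + 1) = b m := by
  induction m with
  | zero =>
    obtain ⟨s, hs⟩ := h0
    obtain ⟨⟨hs_mem, hs_lt⟩, hs_uniq⟩ := eq_singleton_iff_unique_mem.mp hs
    have hκ0 : κ 0 = s := hκ.apply_zero_eq_of_forall_le hs_mem fun z hz =>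
      (lt_or_ge z (b 0)).elim (fun h => (hs_uniq z ⟨hz, h⟩).ge) fun h => hs_lt.le.trans h
    refine hκ.apply_succ_eq_of_forall_notMem_Ioo (hb 0) (hκ0 ▸ hs_lt) fun z hz hzI => ?_
    rw [hκ0] at hzI
    exact hzI.1.ne' (hs_uniq z ⟨hz, hzI.2⟩)
  | succ m ih =>
    obtain ⟨s, hs⟩ := hstep m
    obtain ⟨⟨hs_mem, hs_gt, hs_lt⟩, hs_uniq⟩ := eq_singleton_iff_unique_mem.mp hs
    have hκs : κ (2 * (m + 1)) = s := by
      refine hκ.apply_succ_eq_of_forall_notMem_Ioo (i := 2 * m + 1) hs_mem (ih ▸ hs_gt)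
        fun z hz hzI => ?_
      rw [ih] at hzI
      exact hzI.2.ne (hs_uniq z ⟨hz, hzI.1, hzI.2.trans hs_lt⟩)
    refine hκ.apply_succ_eq_of_forall_notMem_Ioo (hb (m + 1)) (hκs ▸ hs_lt) fun z hz hzI => ?_
    rw [hκs] at hzI
    exact hzI.1.ne' (hs_uniq z ⟨hz, hs_gt.trans hzI.1, hzI.2⟩)

end Enumeration

/-- The set `K_σ` in the variable `x = k l`, with `c = σ l`. -/
def secularRoots (c : ℝ) : Set ℝ :=
  {x | 0 < x ∧ (cos x = 0 ∨ 2 * x * sin x = c * cos x)}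

theorem preimage_mul_right_secularRoots {l : ℝ} (hl : 0 < l) (σ : ℝ) :
    (· * l) ⁻¹' secularRoots (σ * l) =
      {k : ℝ | 0 < k ∧ (cos (k * l) = 0 ∨ 2 * k * sin (k * l) = σ * cos (k * l))} := by
  ext k
  have hscale : 2 * (k * l) * sin (k * l) = σ * l * cos (k * l) ↔
      2 * k * sin (k * l) = σ * cos (k * l) := by
    constructor
    · intro h
      exact mul_right_cancel₀ hl.ne' (by linear_combination h)
    · intro h
      linear_combination l * h
  simp only [secularRoots, mem_preimage, mem_ofPred_eq, mul_pos_iff_of_pos_right hl, hscale]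

theorem odd_mul_pi_div_two_mem_secularRoots (c : ℝ) (m : ℕ) :
    (2 * m + 1) * π / 2 ∈ secularRoots c :=
  ⟨by positivity, Or.inl (cos_eq_zero_iff.mpr ⟨m, by push_cast; ring⟩)⟩

section Shifted

variable {a c : ℝ}

theorem shifted_secular_lt_of_nonpos (hc : 0 < c) {y : ℝ} (hy : y ∈ Ioc (-(π / 2)) 0)
    (hya : 0 < y + a) : 2 * (y + a) * sin y < c * cos y := by
  have hsin : sin y ≤ 0 := sin_nonpos_of_nonpos_of_neg_pi_le hy.2 (by linarith [hy.1, pi_pos])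
  have hcos : 0 < cos y := cos_pos_of_mem_Ioo ⟨hy.1, hy.2.trans_lt (by positivity)⟩
  nlinarith [mul_pos hc hcos]

theorem strictMonoOn_shifted_secular (ha : 0 ≤ a) (hc : 0 < c) :
    StrictMonoOn (fun y => 2 * (y + a) * sin y - c * cos y) (Icc 0 (π / 2)) := by
  have hsin : StrictMonoOn sin (Icc 0 (π / 2)) :=
    strictMonoOn_sin.mono (Icc_subset_Icc_left (by linarith [pi_pos]))
  have hcos : StrictAntiOn cos (Icc 0 (π / 2)) :=
    strictAntiOn_cos.mono (Icc_subset_Icc_right (by linarith [pi_pos]))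
  intro y₁ hy₁ y₂ hy₂ hlt
  have hsin₁ : 0 ≤ sin y₁ := sin_nonneg_of_nonneg_of_le_pi hy₁.1 (by linarith [hy₁.2, pi_pos])
  have h1 := hsin hy₁ hy₂ hlt
  have h2 := hcos hy₁ hy₂ hlt
  show 2 * (y₁ + a) * sin y₁ - c * cos y₁ < 2 * (y₂ + a) * sin y₂ - c * cos y₂
  linarith [mul_le_mul_of_nonneg_right (by linarith : y₁ + a ≤ y₂ + a) hsin₁,
    mul_lt_mul_of_pos_left h1 (by linarith [hy₁.1] : 0 < y₂ + a), mul_lt_mul_of_pos_left h2 hc]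

theorem existsUnique_shifted_secular (ha : 0 ≤ a) (hc : 0 < c) :
    ∃! y, y ∈ Ioo (-(π / 2)) (π / 2) ∧ 0 < y + a ∧ 2 * (y + a) * sin y = c * cos y := by
  set f := fun y => 2 * (y + a) * sin y - c * cos y
  have hmono := strictMonoOn_shifted_secular ha hc
  have hpos_of_root : ∀ y ∈ Ioo (-(π / 2)) (π / 2), 0 < y + a →
      2 * (y + a) * sin y = c * cos y → 0 < y := fun y hy hya h =>
    not_le.mp fun hy0 => (shifted_secular_lt_of_nonpos hc ⟨hy.1, hy0⟩ hya).ne h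
  have hzero : (0 : ℝ) ∈ Ioo (f 0) (f (π / 2)) := by
    simp only [f, sin_zero, cos_zero, sin_pi_div_two, cos_pi_div_two]
    constructor <;> linarith [pi_pos]
  obtain ⟨y, hy, hfy⟩ := intermediate_value_Ioo (by positivity) (by fun_prop) hzero
  refine ⟨y, ⟨⟨by linarith [hy.1, pi_pos], hy.2⟩, by linarith [hy.1], by linarith [hfy]⟩, ?_⟩
  rintro z ⟨hz, hza, hfz⟩
  have hz0 := hpos_of_root z hz hza hfz
  exact hmono.injOn ⟨hz0.le, hz.2.le⟩ (Ioo_subset_Icc_self hy) (by simp only [f] at hfy ⊢; linarith)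

end Shifted

theorem add_nat_mul_pi_mem_secularRoots_iff {c y : ℝ} (hy : y ∈ Ioo (-(π / 2)) (π / 2)) (j : ℕ) :
    y + j * π ∈ secularRoots c ↔ 0 < y + j * π ∧ 2 * (y + j * π) * sin y = c * cos y := by
  have hsign : ((-1 : ℝ) ^ j) ≠ 0 := by positivity
  have hcos : cos (y + j * π) ≠ 0 := by
    rw [cos_add_nat_mul_pi]; exact mul_ne_zero hsign (cos_pos_of_mem_Ioo hy).ne'
  have heq : 2 * (y + j * π) * sin (y + j * π) = c * cos (y + j * π) ↔
      2 * (y + j * π) * sin y = c * cos y := by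
    rw [sin_add_nat_mul_pi, cos_add_nat_mul_pi]
    constructor
    · intro h
      exact mul_left_cancel₀ hsign (by linear_combination h)
    · intro h
      linear_combination (-1) ^ j * h
  simp only [secularRoots, mem_ofPred_eq, hcos, false_or, heq]

theorem secularRoots_inter_Ioo_eq_singleton {c : ℝ} (hc : 0 < c) (j : ℕ) :
    ∃ s, secularRoots c ∩ Ioo (j * π - π / 2) (j * π + π / 2) = {s} := by
  obtain ⟨y, hy, huniq⟩ := existsUnique_shifted_secular (by positivity : (0 : ℝ) ≤ j * π) hc
  refine ⟨y + j * π, eq_singleton_iff_unique_mem.mpr ⟨⟨?_, ?_⟩, ?_⟩⟩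
  · exact (add_nat_mul_pi_mem_secularRoots_iff hy.1 j).mpr hy.2
  · exact ⟨by linarith [hy.1.1], by linarith [hy.1.2]⟩
  · rintro x ⟨hx, hxI⟩
    have hxy : x - j * π ∈ Ioo (-(π / 2)) (π / 2) := ⟨by linarith [hxI.1], by linarith [hxI.2]⟩
    rw [← sub_add_cancel x (j * π), add_nat_mul_pi_mem_secularRoots_iff hxy] at hx
    linarith [huniq _ ⟨hxy, hx⟩]

theorem secularRoots_inter_Iio_eq_singleton {c : ℝ} (hc : 0 < c) :
    ∃ s, secularRoots c ∩ Iio (π / 2) = {s} := by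
  obtain ⟨s, hs⟩ := secularRoots_inter_Ioo_eq_singleton hc 0
  refine ⟨s, Eq.trans ?_ hs⟩
  ext x
  simp only [mem_inter_iff, mem_Iio, mem_Ioo, Nat.cast_zero, zero_mul, zero_sub, zero_add]
  exact ⟨fun ⟨hx, hxI⟩ => ⟨hx, by linarith [hx.1, pi_pos], hxI⟩, fun ⟨hx, _, hxI⟩ => ⟨hx, hxI⟩⟩

/-- The odd-indexed elements of the increasing enumeration of the square roots
of the δ-coupled 2-star eigenvalues are `(2m+1)π/(2l)`, independent of `σ`. -/
theorem two_star_odd_modes (l σ : ℝ) (hl : 0 < l) (hσ : 0 < σ)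
    (κ : ℕ → ℝ) (hmono : StrictMono κ)
    (hrange : Set.range κ =
      {k : ℝ | 0 < k ∧ (Real.cos (k * l) = 0 ∨
        2 * k * Real.sin (k * l) = σ * Real.cos (k * l))}) :
    ∀ m : ℕ, κ (2 * m + 1) = (2 * (m : ℝ) + 1) * π / (2 * l) := by
  intro m
  have hc : 0 < σ * l := mul_pos hσ hl
  have hrange' : range (fun n => κ n * l) = secularRoots (σ * l) := by
    rw [show (fun n => κ n * l) = (· * l) ∘ κ from rfl, range_comp, hrange,
      ← preimage_mul_right_secularRoots hl, image_preimage_eq _ (mul_right_surjective₀ hl.ne')]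
  have hodd := (hmono.mul_const hl).apply_two_mul_add_one_eq
    (b := fun m => (2 * m + 1) * π / 2) ?_ ?_ ?_ m
  · rw [eq_div_iff (by positivity)]
    linear_combination 2 * hodd
  all_goals rw [hrange']
  · exact odd_mul_pi_div_two_mem_secularRoots _
  · simpa using secularRoots_inter_Iio_eq_singleton hc
  · intro j
    obtain ⟨s, hs⟩ := secularRoots_inter_Ioo_eq_singleton hc (j + 1)
    exact ⟨s, by convert hs using 3 <;> first | rfl | (push_cast; ring)⟩
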